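/- arXiv:2203.11310 — 2 statements merged into one kernel-verified Lean document; each statement's English description precedes it below -/
import Mathlib

section
/- Let P₀ : ℝ → ℝ be a probability density (nonnegative, integrable, ∫ P₀ = 1) such that x ↦ xⁿ P₀(x) is integrable for every integer n ≥ 0, and suppose its characteristic function M₀(θ) = ∫ P₀(x) e^{iθx} dx satisfies M₀(θ) = 0 for all |θ| > L, where L > 0. Then for every λ > L, every φ ∈ ℝ, and every ε ∈ [-1,1], the function P_ε(x) = P₀(x)(1 + ε cos(λx + φ)) is a probability density, and for every integer n ≥ 0 it satisfies ∫ xⁿ P_ε(x) dx = ∫ xⁿ P₀(x) dx. -/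
/-!
Up to powers of `i`, `θ ↦ ∫ xⁿ P₀(x) e^{iθx} dx` is the `n`-th derivative of `M₀`, so it vanishes
wherever `M₀` vanishes on an open set, in particular on `θ > L`. Multiplying by `e^{iφ}` and taking
the real part at `θ = λ` shows that `xⁿ P₀(x)` is orthogonal to `cos(λx + φ)`: the perturbation
changes no moment, and `|ε cos| ≤ 1` keeps `P_ε` nonnegative.
-/

open MeasureTheory Real Complex

theorem norm_cexp_I_mul_ofReal_mul_ofReal (θ x : ℝ) : ‖cexp (I * θ * x)‖ = 1 := by
  rw [norm_exp]; simp

theorem MeasureTheory.Integrable.mul_cexp_I_mul {f : ℝ → ℂ} (hf : Integrable f) (θ : ℝ) :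
    Integrable fun x : ℝ => f x * cexp (I * θ * x) :=
  hf.mul_bdd (by fun_prop) (ae_of_all _ fun x => (norm_cexp_I_mul_ofReal_mul_ofReal θ x).le)

theorem hasDerivAt_integral_mul_cexp {f : ℝ → ℂ} (hf : Integrable f)
    (hxf : Integrable fun x : ℝ => (x : ℂ) * f x) (θ : ℝ) :
    HasDerivAt (fun θ : ℝ => ∫ x : ℝ, f x * cexp (I * θ * x))
      (I * ∫ x : ℝ, (x : ℂ) * f x * cexp (I * θ * x)) θ := by
  have hderiv (x θ : ℝ) : HasDerivAt (fun θ : ℝ => f x * cexp (I * θ * x))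
      (I * ((x : ℂ) * f x * cexp (I * θ * x))) θ := by
    have hlin : HasDerivAt (fun θ : ℝ => I * θ * x) (I * x) θ := by
      simpa using ((hasDerivAt_id θ).ofReal_comp.const_mul I).mul_const (x : ℂ)
    exact (hlin.cexp.const_mul (f x)).congr_deriv (by ring)
  rw [← integral_const_mul]
  exact (hasDerivAt_integral_of_dominated_loc_of_deriv_le (bound := fun x : ℝ => ‖(x : ℂ) * f x‖)
    Filter.univ_mem (.of_forall fun θ => (hf.mul_cexp_I_mul θ).aestronglyMeasurable)
    (hf.mul_cexp_I_mul θ) ((hxf.mul_cexp_I_mul θ).const_mul I).aestronglyMeasurable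
    (ae_of_all _ fun x θ _ => by simp [norm_cexp_I_mul_ofReal_mul_ofReal])
    hxf.norm (ae_of_all _ fun x θ _ => hderiv x θ)).2

theorem integral_ofReal_mul_mul_cexp_eq_zero {f : ℝ → ℂ} (hf : Integrable f)
    (hxf : Integrable fun x : ℝ => (x : ℂ) * f x) {U : Set ℝ} (hU : IsOpen U)
    (h : ∀ θ ∈ U, ∫ x : ℝ, f x * cexp (I * θ * x) = 0) :
    ∀ θ ∈ U, ∫ x : ℝ, (x : ℂ) * f x * cexp (I * θ * x) = 0 := by
  intro θ hθ
  have hzero : HasDerivAt (fun θ : ℝ => ∫ x : ℝ, f x * cexp (I * θ * x)) 0 θ :=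
    (hasDerivAt_const θ 0).congr_of_eventuallyEq (Filter.eventually_of_mem (hU.mem_nhds hθ) h)
  simpa [I_ne_zero] using (hasDerivAt_integral_mul_cexp hf hxf θ).unique hzero

theorem integral_pow_mul_mul_cexp_eq_zero {f : ℝ → ℂ}
    (hmom : ∀ n : ℕ, Integrable fun x : ℝ => (x : ℂ) ^ n * f x) {U : Set ℝ} (hU : IsOpen U)
    (h : ∀ θ ∈ U, ∫ x : ℝ, f x * cexp (I * θ * x) = 0) (n : ℕ) :
    ∀ θ ∈ U, ∫ x : ℝ, (x : ℂ) ^ n * f x * cexp (I * θ * x) = 0 := by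
  induction n with
  | zero => simpa using h
  | succ n ih =>
    have hxf : Integrable fun x : ℝ => (x : ℂ) * ((x : ℂ) ^ n * f x) := by
      simpa [pow_succ, mul_assoc, mul_comm, mul_left_comm] using hmom (n + 1)
    simpa [pow_succ, mul_assoc, mul_comm, mul_left_comm] using
      integral_ofReal_mul_mul_cexp_eq_zero (hmom n) hxf hU ih

theorem MeasureTheory.Integrable.mul_cos {g : ℝ → ℝ} (hg : Integrable g) (lam φ : ℝ) :
    Integrable fun x => g x * Real.cos (lam * x + φ) :=
  hg.mul_bdd (by fun_prop) (ae_of_all _ fun x => by simpa using abs_cos_le_one (lam * x + φ))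

theorem integral_mul_cos_eq_re {g : ℝ → ℝ} (hg : Integrable g) (lam φ : ℝ) :
    ∫ x, g x * Real.cos (lam * x + φ)
      = (cexp (φ * I) * ∫ x, (g x : ℂ) * cexp (I * lam * x)).re := by
  have hpt (x : ℝ) : cexp (φ * I) * ((g x : ℂ) * cexp (I * lam * x))
      = (g x : ℂ) * cexp ((lam * x + φ : ℝ) * I) := by
    rw [mul_left_comm, ← Complex.exp_add]; push_cast; ring_nf
  calc ∫ x, g x * Real.cos (lam * x + φ)
      = ∫ x, (cexp (φ * I) * ((g x : ℂ) * cexp (I * lam * x))).re := by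
        simp only [hpt, re_ofReal_mul, exp_ofReal_mul_I_re]
    _ = (∫ x, cexp (φ * I) * ((g x : ℂ) * cexp (I * lam * x))).re :=
        integral_re ((hg.ofReal.mul_cexp_I_mul lam).const_mul _)
    _ = _ := by rw [integral_const_mul]

theorem one_add_mul_cos_nonneg {ε : ℝ} (hε : ε ∈ Set.Icc (-1 : ℝ) 1) (t : ℝ) :
    0 ≤ 1 + ε * Real.cos t := by
  nlinarith [neg_one_le_cos t, cos_le_one t, hε.1, hε.2]

theorem stmt_5_general (P₀ : ℝ → ℝ)
    (hnn : ∀ x, 0 ≤ P₀ x) (hone : ∫ x, P₀ x = 1)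
    (hmom : ∀ n : ℕ, Integrable (fun x => x ^ n * P₀ x))
    (L : ℝ)
    (hvanish : ∀ θ : ℝ, L < |θ| →
      ∫ x : ℝ, (↑(P₀ x) : ℂ) * Complex.exp (Complex.I * θ * x) = 0)
    (lam φ ε : ℝ) (hlam : L < lam) (hε : ε ∈ Set.Icc (-1 : ℝ) 1) :
    (∀ x, 0 ≤ P₀ x * (1 + ε * Real.cos (lam * x + φ))) ∧
      Integrable (fun x => P₀ x * (1 + ε * Real.cos (lam * x + φ))) ∧
      (∫ x, P₀ x * (1 + ε * Real.cos (lam * x + φ))) = 1 ∧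
      ∀ n : ℕ, ∫ x, x ^ n * (P₀ x * (1 + ε * Real.cos (lam * x + φ)))
        = ∫ x, x ^ n * P₀ x := by
  have hmomC (n : ℕ) : Integrable fun x : ℝ => (x : ℂ) ^ n * (P₀ x : ℂ) := by
    simpa using (hmom n).ofReal (𝕜 := ℂ)
  have horth (n : ℕ) : ∫ x, x ^ n * P₀ x * Real.cos (lam * x + φ) = 0 := by
    have := integral_pow_mul_mul_cexp_eq_zero hmomC isOpen_Ioi
      (fun θ hθ => hvanish θ (lt_of_lt_of_le hθ (le_abs_self θ))) n lam hlam
    rw [integral_mul_cos_eq_re (hmom n)]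
    simp [this]
  have hsplit (n : ℕ) : (fun x => x ^ n * (P₀ x * (1 + ε * Real.cos (lam * x + φ))))
      = fun x => x ^ n * P₀ x + ε * (x ^ n * P₀ x * Real.cos (lam * x + φ)) := by
    ext x; ring
  have hintegrable (n : ℕ) :
      Integrable fun x => x ^ n * (P₀ x * (1 + ε * Real.cos (lam * x + φ))) := by
    rw [hsplit]
    exact (hmom n).add (((hmom n).mul_cos lam φ).const_mul ε)
  have hmoment (n : ℕ) : ∫ x, x ^ n * (P₀ x * (1 + ε * Real.cos (lam * x + φ)))
      = ∫ x, x ^ n * P₀ x := by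
    rw [hsplit, integral_add (hmom n) (((hmom n).mul_cos lam φ).const_mul ε), integral_const_mul,
      horth, mul_zero, add_zero]
  refine ⟨fun x => mul_nonneg (hnn x) (one_add_mul_cos_nonneg hε _), by simpa using hintegrable 0,
    by simpa [hone] using hmoment 0, hmoment⟩

/-- If the probability density `P₀` has all moments finite and a
characteristic function vanishing for `|θ| > L > 0`, then for every `λ > L`, `φ ∈ ℝ`,
`ε ∈ [-1,1]`, the perturbed function `P_ε(x) = P₀(x)(1 + ε cos(λx + φ))` is a
probability density with the same moments as `P₀`. -/
theorem stmt_5 (P₀ : ℝ → ℝ)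
    (hnn : ∀ x, 0 ≤ P₀ x) (hint : Integrable P₀) (hone : ∫ x, P₀ x = 1)
    (hmom : ∀ n : ℕ, Integrable (fun x => x ^ n * P₀ x))
    (L : ℝ) (hL : 0 < L)
    (hvanish : ∀ θ : ℝ, L < |θ| →
      ∫ x : ℝ, (↑(P₀ x) : ℂ) * Complex.exp (Complex.I * θ * x) = 0)
    (lam φ ε : ℝ) (hlam : L < lam) (hε : ε ∈ Set.Icc (-1 : ℝ) 1) :
    (∀ x, 0 ≤ P₀ x * (1 + ε * Real.cos (lam * x + φ))) ∧
      Integrable (fun x => P₀ x * (1 + ε * Real.cos (lam * x + φ))) ∧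
      (∫ x, P₀ x * (1 + ε * Real.cos (lam * x + φ))) = 1 ∧
      ∀ n : ℕ, ∫ x, x ^ n * (P₀ x * (1 + ε * Real.cos (lam * x + φ)))
        = ∫ x, x ^ n * P₀ x :=
  stmt_5_general P₀ hnn hone hmom L hvanish lam φ ε hlam hε
end

section
/- Let P₀ : ℝ → ℝ be a continuous probability density with all moments finite and whose characteristic function vanishes for |θ| > L (L > 0), let λ > L and φ ∈ ℝ, and suppose there exists a point x₀ with P₀(x₀) > 0. Then for ε, ε' ∈ [-1,1] with ε ≠ ε', the densities P_ε(x) = P₀(x)(1 + ε cos(λx + φ)) and P_{ε'}(x) = P₀(x)(1 + ε' cos(λx + φ)) are not equal: there exists x ∈ ℝ with P_ε(x) ≠ P_{ε'}(x). Consequently P₀ is M-indeterminate: distinct densities share all of its moments. -/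
/-!
Band-limitation of the characteristic function `M₀` is inherited by every `xⁿ P₀(x)`: up to a
constant, the Fourier transform of `xⁿ P₀` is the `n`-th derivative of `M₀`, which vanishes on the
open set `|θ| > L`. Taking real parts at `θ = λ > L` gives `∫ xⁿ P₀(x) cos (λx + φ) dx = 0`, so
all moments of `P_ε` equal those of `P₀`. The densities differ for `ε ≠ ε'` at any point where
`P₀ > 0` and `cos (λx + φ) ≠ 0`, and such points exist near `x₀` because `λ ≠ 0`.
-/

open MeasureTheory Real Complex
open FourierTransform Topology

lemma integral_mul_cexp_eq_fourier (g : ℝ → ℂ) (θ : ℝ) :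
    ∫ x, g x * cexp (I * θ * x) = 𝓕 g (-θ / (2 * π)) := by
  rw [Real.fourier_real_eq_integral_exp_smul]
  congr 1 with x
  rw [smul_eq_mul, mul_comm]
  congr 2
  push_cast
  field_simp

lemma integral_pow_mul_mul_cexp_eq_zero_s10 {g : ℝ → ℂ}
    (hg : ∀ k : ℕ, Integrable (fun x : ℝ => x ^ k • g x)) {L : ℝ}
    (hvanish : ∀ θ : ℝ, L < |θ| → ∫ x, g x * cexp (I * θ * x) = 0)
    (n : ℕ) {θ : ℝ} (hθ : L < |θ|) :
    ∫ x : ℝ, (x : ℂ) ^ n * g x * cexp (I * θ * x) = 0 := by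
  set U : Set ℝ := (fun w => -2 * π * w) ⁻¹' {t | L < |t|}
  have hU : IsOpen U := (isOpen_lt continuous_const continuous_abs).preimage (by fun_prop)
  have hFU : Set.EqOn (𝓕 g) 0 U := fun w hw => by
    have := integral_mul_cexp_eq_fourier g (-2 * π * w)
    rwa [show -(-2 * π * w) / (2 * π) = w by field_simp, hvanish _ hw, eq_comm] at this
  have hθU : -θ / (2 * π) ∈ U := by
    show L < |-2 * π * (-θ / (2 * π))|
    rwa [show -2 * π * (-θ / (2 * π)) = θ by field_simp]
  have hderiv := hFU.iteratedDeriv_of_isOpen hU n hθU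
  rw [Real.iteratedDeriv_fourier (N := n) (fun k _ => hg k) le_rfl, iteratedDeriv_const_zero,
    ← integral_mul_cexp_eq_fourier] at hderiv
  have hfactor : ∀ x : ℝ, (-2 * π * I * x) ^ n • g x * cexp (I * θ * x)
      = (-2 * π * I) ^ n * ((x : ℂ) ^ n * g x * cexp (I * θ * x)) := fun x => by
    rw [smul_eq_mul]; ring
  simp_rw [hfactor, integral_const_mul] at hderiv
  exact (mul_eq_zero.mp hderiv).resolve_left (pow_ne_zero _ (by simp [pi_ne_zero, I_ne_zero]))

lemma integrable_of_norm_le_abs_pow_mul {E : Type*} [NormedAddCommGroup E] {f : ℝ → ℝ} {n : ℕ}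
    (hf : Integrable (fun x => |x| ^ n * f x)) {h : ℝ → E} (hh : AEStronglyMeasurable h)
    (hle : ∀ x, ‖h x‖ ≤ |x| ^ n * |f x|) : Integrable h :=
  hf.norm.mono' hh (.of_forall fun x => by simpa [abs_mul] using hle x)

section Moments

variable {f : ℝ → ℝ} (hmom : ∀ k : ℕ, Integrable (fun x => |x| ^ k * f x)) {L : ℝ}
  (hvanish : ∀ θ : ℝ, L < |θ| → ∫ x : ℝ, (f x : ℂ) * cexp (I * θ * x) = 0)
include hmom

lemma aestronglyMeasurable_of_integrable_abs_pow_mul : AEStronglyMeasurable f := by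
  simpa using (hmom 0).aestronglyMeasurable

include hvanish in
lemma integral_pow_mul_mul_cos_eq_zero (n : ℕ) {lam : ℝ} (hlam : L < |lam|) (φ : ℝ) :
    ∫ x, x ^ n * f x * Real.cos (lam * x + φ) = 0 := by
  have hf := aestronglyMeasurable_of_integrable_abs_pow_mul hmom
  have hg : ∀ k : ℕ, Integrable (fun x : ℝ => x ^ k • (f x : ℂ)) := fun k =>
    integrable_of_norm_le_abs_pow_mul (hmom k) (by fun_prop) fun x => by simp
  have hosc : Integrable (fun x : ℝ => (x : ℂ) ^ n * f x * cexp (I * lam * x)) :=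
    integrable_of_norm_le_abs_pow_mul (hmom n) (by fun_prop) fun x => by
      simp [norm_exp]
  have hre : ∀ x : ℝ, x ^ n * f x * Real.cos (lam * x + φ)
      = (cexp (I * φ) * ((x : ℂ) ^ n * f x * cexp (I * lam * x))).re := fun x => by
    rw [show cexp (I * φ) * ((x : ℂ) ^ n * f x * cexp (I * lam * x))
        = ((x ^ n * f x : ℝ) : ℂ) * cexp ((lam * x + φ : ℝ) * I) by
      push_cast
      rw [show ((lam : ℂ) * x + φ) * I = I * lam * x + I * φ by ring, Complex.exp_add]
      ring]
    rw [re_ofReal_mul, exp_ofReal_mul_I_re]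
  calc ∫ x, x ^ n * f x * Real.cos (lam * x + φ)
      _ = (∫ x : ℝ, cexp (I * φ) * ((x : ℂ) ^ n * f x * cexp (I * lam * x))).re := by
        simp_rw [hre]; exact integral_re (hosc.const_mul _)
      _ = 0 := by
        rw [integral_const_mul, integral_pow_mul_mul_cexp_eq_zero_s10 hg hvanish n hlam, mul_zero,
          zero_re]

include hvanish in
lemma integral_pow_mul_mul_one_add_cos (n : ℕ) {lam : ℝ} (hlam : L < |lam|) (φ ε : ℝ) :
    ∫ x, x ^ n * (f x * (1 + ε * Real.cos (lam * x + φ))) = ∫ x, x ^ n * f x := by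
  have hf := aestronglyMeasurable_of_integrable_abs_pow_mul hmom
  have hpow : Integrable (fun x => x ^ n * f x) :=
    integrable_of_norm_le_abs_pow_mul (hmom n) (by fun_prop) fun x => by simp
  have hcos : Integrable (fun x => x ^ n * f x * Real.cos (lam * x + φ)) :=
    integrable_of_norm_le_abs_pow_mul (hmom n) (by fun_prop) fun x => by
      simpa [abs_mul] using mul_le_of_le_one_right (by positivity) (abs_cos_le_one _)
  simp_rw [show ∀ x, x ^ n * (f x * (1 + ε * Real.cos (lam * x + φ)))
      = x ^ n * f x + ε * (x ^ n * f x * Real.cos (lam * x + φ)) from fun x => by ring]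
  rw [integral_add hpow (hcos.const_mul ε), integral_const_mul,
    integral_pow_mul_mul_cos_eq_zero hmom hvanish n hlam, mul_zero, add_zero]

end Moments

/-- Otherwise `cos (λx + φ)` vanishes near `x₀`, so does its derivative `-λ sin (λx + φ)`,
contradicting `sin² + cos² = 1`. -/
lemma exists_ne_zero_and_cos_ne_zero {f : ℝ → ℝ} (hf : Continuous f) {x₀ : ℝ} (hx₀ : f x₀ ≠ 0)
    {lam : ℝ} (hlam : lam ≠ 0) (φ : ℝ) : ∃ x, f x ≠ 0 ∧ Real.cos (lam * x + φ) ≠ 0 := by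
  by_contra! h
  have hcos : (fun x => Real.cos (lam * x + φ)) =ᶠ[𝓝 x₀] fun _ => 0 := by
    filter_upwards [hf.continuousAt.eventually_ne hx₀] with x hx using h x hx
  have hderiv : HasDerivAt (fun x => Real.cos (lam * x + φ)) (-Real.sin (lam * x₀ + φ) * lam) x₀ :=
    ((hasDerivAt_id x₀).const_mul lam |>.add_const φ).cos.congr_deriv (by simp)
  have hsin : Real.sin (lam * x₀ + φ) = 0 := by
    have := hderiv.deriv.symm.trans (hcos.deriv_eq.trans (deriv_const _ _))
    simpa [hlam] using this
  simpa [hsin, h x₀ hx₀] using Real.sin_sq_add_cos_sq (lam * x₀ + φ)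

theorem stmt_10_general (P₀ : ℝ → ℝ) (hcont : Continuous P₀)
    (hmom : ∀ n : ℕ, Integrable (fun x => |x| ^ n * P₀ x))
    (L : ℝ) (hL : 0 < L)
    (hvanish : ∀ θ : ℝ, L < |θ| →
      ∫ x : ℝ, (↑(P₀ x) : ℂ) * Complex.exp (Complex.I * θ * x) = 0)
    (lam φ : ℝ) (hlam : L < lam)
    (x₀ : ℝ) (hx₀ : 0 < P₀ x₀)
    (ε ε' : ℝ)
    (hne : ε ≠ ε') :
    (∃ x : ℝ, P₀ x * (1 + ε * Real.cos (lam * x + φ))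
        ≠ P₀ x * (1 + ε' * Real.cos (lam * x + φ))) ∧
      ∀ n : ℕ, ∫ x, x ^ n * (P₀ x * (1 + ε * Real.cos (lam * x + φ)))
        = ∫ x, x ^ n * (P₀ x * (1 + ε' * Real.cos (lam * x + φ))) := by
  refine ⟨?_, fun n => ?_⟩
  · obtain ⟨x, hPx, hcos⟩ := exists_ne_zero_and_cos_ne_zero hcont hx₀.ne' (hL.trans hlam).ne' φ
    refine ⟨x, fun h => hne ?_⟩
    have hfactor := mul_left_cancel₀ hPx h
    exact mul_right_cancel₀ hcos (by linarith)
  · have hlam' : L < |lam| := hlam.trans_le (le_abs_self lam)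
    rw [integral_pow_mul_mul_one_add_cos hmom hvanish n hlam',
      integral_pow_mul_mul_one_add_cos hmom hvanish n hlam']

/-- For a continuous probability density `P₀` with all moments finite,
characteristic function vanishing for `|θ| > L > 0`, and `P₀(x₀) > 0` somewhere, the
Stieltjes-class densities `P_ε(x) = P₀(x)(1 + ε cos(λx + φ))` (with `λ > L`) for
distinct `ε ≠ ε'` in `[-1,1]` are distinct functions yet share all moments: `P₀` is
M-indeterminate. -/
theorem stmt_10 (P₀ : ℝ → ℝ) (hcont : Continuous P₀)
    (hnn : ∀ x, 0 ≤ P₀ x) (hint : Integrable P₀) (hone : ∫ x, P₀ x = 1)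
    (hmom : ∀ n : ℕ, Integrable (fun x => |x| ^ n * P₀ x))
    (L : ℝ) (hL : 0 < L)
    (hvanish : ∀ θ : ℝ, L < |θ| →
      ∫ x : ℝ, (↑(P₀ x) : ℂ) * Complex.exp (Complex.I * θ * x) = 0)
    (lam φ : ℝ) (hlam : L < lam)
    (x₀ : ℝ) (hx₀ : 0 < P₀ x₀)
    (ε ε' : ℝ) (hε : ε ∈ Set.Icc (-1 : ℝ) 1) (hε' : ε' ∈ Set.Icc (-1 : ℝ) 1)
    (hne : ε ≠ ε') :
    (∃ x : ℝ, P₀ x * (1 + ε * Real.cos (lam * x + φ))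
        ≠ P₀ x * (1 + ε' * Real.cos (lam * x + φ))) ∧
      ∀ n : ℕ, ∫ x, x ^ n * (P₀ x * (1 + ε * Real.cos (lam * x + φ)))
        = ∫ x, x ^ n * (P₀ x * (1 + ε' * Real.cos (lam * x + φ))) :=
  stmt_10_general P₀ hcont hmom L hL hvanish lam φ hlam x₀ hx₀ ε ε' hne
end
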